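/- Every k-separable reflexive locally finite relation Γ is k-faithful or its reverse Γ⁻ is k-faithful. Moreover, if V is infinite then Γ is k-faithful. -/
import Mathlib


variable {V : Type*}

/-- Image of a set under a relation. -/
def GImg (E : V → V → Prop) (X : Set V) : Set V := {y | ∃ x ∈ X, E x y}

/-- Board (boundary) of a set. -/
def GBd (E : V → V → Prop) (X : Set V) : Set V := GImg E X \ X

/-- Exterior of a set. -/
def GExt (E : V → V → Prop) (X : Set V) : Set V := (GImg E X)ᶜ

/-- Reverse relation. -/
def GRev (E : V → V → Prop) : V → V → Prop := fun x y => E y x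

/-- Reflexivity. -/
def GRefl (E : V → V → Prop) : Prop := ∀ x, E x x

/-- Local finiteness. -/
def GLocFin (E : V → V → Prop) : Prop :=
  ∀ x : V, {y | E x y}.Finite ∧ {y | E y x}.Finite

/-- k-separability. -/
def GSep (E : V → V → Prop) (k : ℕ) : Prop :=
  ∃ X : Set V, X.Finite ∧ k ≤ X.ncard ∧ k ≤ (GExt E X).ncard

/-- The k-th connectivity. -/
noncomputable def GKappa (E : V → V → Prop) (k : ℕ) : ℕ :=
  sInf {n | ∃ X : Set V, X.Finite ∧ k ≤ X.ncard ∧ k ≤ (GExt E X).ncard ∧ (GBd E X).ncard = n}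

/-- k-fragments. -/
def GFrag (E : V → V → Prop) (k : ℕ) (X : Set V) : Prop :=
  X.Finite ∧ k ≤ X.ncard ∧ k ≤ (GExt E X).ncard ∧ (GBd E X).ncard = GKappa E k

/-- k-atoms: k-fragments of minimal cardinality. -/
def GAtom (E : V → V → Prop) (k : ℕ) (X : Set V) : Prop :=
  GFrag E k X ∧ ∀ Y : Set V, GFrag E k Y → X.ncard ≤ Y.ncard

/-- k-faithful: every k-atom A satisfies |A| ≤ |∇(A)|. -/
def GFaithful (E : V → V → Prop) (k : ℕ) : Prop :=
  ∀ A : Set V, GAtom E k A → A.ncard ≤ (GExt E A).ncard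

section Aux

variable {E : V → V → Prop} {k : ℕ}

lemma gimg_finite (hloc : GLocFin E) {X : Set V} (hX : X.Finite) : (GImg E X).Finite := by
  have h : GImg E X = ⋃ x ∈ X, {y | E x y} := by
    ext y; simp [GImg]
  rw [h]
  exact hX.biUnion fun x _ => (hloc x).1

lemma finite_of_sep (hloc : GLocFin E) (hk : 1 ≤ k) (hsep : GSep E k) : Finite V := by
  by_contra h
  have : Infinite V := not_finite_iff_infinite.mp h
  obtain ⟨X, hXf, _, hXe⟩ := hsep
  have hinf : (GExt E X).Infinite := (gimg_finite hloc hXf).infinite_compl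
  rw [hinf.ncard] at hXe
  omega

lemma subset_ext_rev (X : Set V) : X ⊆ GExt (GRev E) (GExt E X) := by
  intro z hz hmem
  obtain ⟨y, hy, hyz⟩ := hmem
  exact hy ⟨z, hz, hyz⟩

lemma bd_rev_subset (X : Set V) : GBd (GRev E) (GExt E X) ⊆ GBd E X := by
  intro z hz
  obtain ⟨hz1, hz2⟩ := hz
  refine ⟨not_not.mp hz2, fun hzX => ?_⟩
  exact subset_ext_rev X hzX hz1

variable [Finite V]

lemma cand_rev {X : Set V} (h1 : k ≤ X.ncard) (h2 : k ≤ (GExt E X).ncard) :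
    (GExt E X).Finite ∧ k ≤ (GExt E X).ncard ∧ k ≤ (GExt (GRev E) (GExt E X)).ncard :=
  ⟨Set.toFinite _, h2,
    le_trans h1 (Set.ncard_le_ncard (subset_ext_rev X) (Set.toFinite _))⟩

lemma frag_exists (hsep : GSep E k) : ∃ X : Set V, GFrag E k X := by
  have hne : {n | ∃ X : Set V, X.Finite ∧ k ≤ X.ncard ∧ k ≤ (GExt E X).ncard ∧
      (GBd E X).ncard = n}.Nonempty := by
    obtain ⟨X, h1, h2, h3⟩ := hsep
    exact ⟨(GBd E X).ncard, X, h1, h2, h3, rfl⟩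
  obtain ⟨X, h1, h2, h3, h4⟩ := Nat.sInf_mem hne
  exact ⟨X, h1, h2, h3, h4⟩

lemma sep_rev (hsep : GSep E k) : GSep (GRev E) k := by
  obtain ⟨X, _, h2, h3⟩ := hsep
  obtain ⟨a, b, c⟩ := cand_rev h2 h3
  exact ⟨GExt E X, a, b, c⟩

lemma kappa_rev_le (hsep : GSep E k) : GKappa (GRev E) k ≤ GKappa E k := by
  obtain ⟨X, hXf, h1, h2, hbd⟩ := frag_exists hsep
  obtain ⟨a, b, c⟩ := cand_rev h1 h2
  have hle : GKappa (GRev E) k ≤ (GBd (GRev E) (GExt E X)).ncard :=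
    Nat.sInf_le ⟨GExt E X, a, b, c, rfl⟩
  calc GKappa (GRev E) k ≤ (GBd (GRev E) (GExt E X)).ncard := hle
    _ ≤ (GBd E X).ncard := Set.ncard_le_ncard (bd_rev_subset X) (Set.toFinite _)
    _ = GKappa E k := hbd

lemma kappa_rev_eq (hsep : GSep E k) : GKappa (GRev E) k = GKappa E k := by
  refine le_antisymm (kappa_rev_le hsep) ?_
  have h := kappa_rev_le (E := GRev E) (sep_rev hsep)
  have hrr : GRev (GRev E) = E := rfl
  rwa [hrr] at h

lemma frag_dual (hrefl : GRefl E) (hsep : GSep E k) {X : Set V} (hX : GFrag E k X) :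
    GFrag (GRev E) k (GExt E X) ∧ GExt (GRev E) (GExt E X) = X := by
  obtain ⟨hXf, h1, h2, hbd⟩ := hX
  obtain ⟨a, b, c⟩ := cand_rev h1 h2
  have hsub := bd_rev_subset (E := E) X
  have hle : (GBd (GRev E) (GExt E X)).ncard ≤ (GBd E X).ncard :=
    Set.ncard_le_ncard hsub (Set.toFinite _)
  have hge : GKappa (GRev E) k ≤ (GBd (GRev E) (GExt E X)).ncard :=
    Nat.sInf_le ⟨GExt E X, a, b, c, rfl⟩
  have hk' : GKappa (GRev E) k = GKappa E k := kappa_rev_eq hsep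
  have heq : (GBd (GRev E) (GExt E X)).ncard = GKappa (GRev E) k := by omega
  have hbdeq : GBd (GRev E) (GExt E X) = GBd E X :=
    Set.eq_of_subset_of_ncard_le hsub (by omega) (Set.toFinite _)
  refine ⟨⟨Set.toFinite _, b, c, heq⟩, ?_⟩
  refine Set.Subset.antisymm ?_ (subset_ext_rev X)
  intro z hz
  by_contra hzX
  have hzY : z ∉ GExt E X := fun h => hz ⟨z, h, hrefl z⟩
  have hzBd : z ∈ GBd E X := ⟨not_not.mp hzY, hzX⟩
  rw [← hbdeq] at hzBd
  exact hz hzBd.1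

lemma atom_exists (hsep : GSep E k) : ∃ A : Set V, GAtom E k A := by
  have hne : {n | ∃ X : Set V, GFrag E k X ∧ X.ncard = n}.Nonempty := by
    obtain ⟨X, hX⟩ := frag_exists hsep
    exact ⟨X.ncard, X, hX, rfl⟩
  obtain ⟨A, hA, hcard⟩ := Nat.sInf_mem hne
  refine ⟨A, hA, fun Y hY => ?_⟩
  rw [hcard]
  exact Nat.sInf_le ⟨Y, hY, rfl⟩

end Aux

theorem stmt16 {V : Type*} (E : V → V → Prop) (hrefl : GRefl E) (hloc : GLocFin E)
    (k : ℕ) (hk : 1 ≤ k) (hsep : GSep E k) :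
    (GFaithful E k ∨ GFaithful (GRev E) k) ∧ (Infinite V → GFaithful E k) := by
  have hfin : Finite V := finite_of_sep hloc hk hsep
  constructor
  · by_cases hf : GFaithful E k
    · exact Or.inl hf
    · right
      unfold GFaithful at hf
      push_neg at hf
      obtain ⟨A, hA, hlt⟩ := hf
      intro B hB
      have hd := frag_dual hrefl hsep hA.1
      have h1 : B.ncard ≤ (GExt E A).ncard := hB.2 _ hd.1
      have hrefl' : GRefl (GRev E) := fun x => hrefl x
      have hsep' : GSep (GRev E) k := sep_rev hsep
      have hd2 := frag_dual hrefl' hsep' hB.1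
      have hrr : GRev (GRev E) = E := rfl
      rw [hrr] at hd2
      have h2 : A.ncard ≤ (GExt (GRev E) B).ncard := hA.2 _ hd2.1
      omega
  · intro hinf
    exact absurd hfin (not_finite_iff_infinite.mpr hinf)
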